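/- Let β > 0, let (φ_β, ψ_β) be a pair of β-potentials, and let π_β be the probability measure with density e^{βA+φ_β+ψ_β} with respect to μ×ν. Then for every π ∈ Π(μ,ν) one has ∫ βA dπ + H(π) ≤ −∫ φ_β dμ − ∫ ψ_β dν, with equality for π = π_β; consequently P(βA) = ∫ βA dπ_β + H(π_β) = −∫ φ_β dμ − ∫ ψ_β dν. -/

import Mathlib

open MeasureTheory Filter

open Classical in
noncomputable def negKL {X Y : Type*} [MeasurableSpace X] [MeasurableSpace Y]
    (μ : Measure X) (ν : Measure Y) (π : Measure (X × Y)) : EReal :=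
  if π ≪ μ.prod ν ∧ Integrable (llr π (μ.prod ν)) π
  then ((- ∫ p, llr π (μ.prod ν) p ∂π : ℝ) : EReal)
  else ⊥

def IsPlan {X Y : Type*} [MeasurableSpace X] [MeasurableSpace Y]
    (μ : Measure X) (ν : Measure Y) (π : Measure (X × Y)) : Prop :=
  IsProbabilityMeasure π ∧ π.map Prod.fst = μ ∧ π.map Prod.snd = ν

noncomputable def pressure {X Y : Type*} [MeasurableSpace X] [MeasurableSpace Y]
    (μ : Measure X) (ν : Measure Y) (B : X × Y → ℝ) : EReal :=
  ⨆ π : {π : Measure (X × Y) // IsPlan μ ν π},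
    ((∫ p, B p ∂(π.1) : ℝ) : EReal) + negKL μ ν π.1

noncomputable def transportCost {X Y : Type*} [MeasurableSpace X] [MeasurableSpace Y]
    (μ : Measure X) (ν : Measure Y) (c : X × Y → ℝ) : ℝ :=
  ⨅ π : {π : Measure (X × Y) // IsPlan μ ν π}, ∫ p, c p ∂(π.1)

noncomputable def maxVal {X Y : Type*} [MeasurableSpace X] [MeasurableSpace Y]
    (μ : Measure X) (ν : Measure Y) (A : X × Y → ℝ) : ℝ :=
  ⨆ π : {π : Measure (X × Y) // IsPlan μ ν π}, ∫ p, A p ∂(π.1)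

noncomputable def Hmax {X Y : Type*} [MeasurableSpace X] [MeasurableSpace Y]
    (μ : Measure X) (ν : Measure Y) (A : X × Y → ℝ) : EReal :=
  ⨆ π : {π : Measure (X × Y) // IsPlan μ ν π ∧ ∫ p, A p ∂π = maxVal μ ν A},
    negKL μ ν π.1

/-!
Write `f = βA + φ ⊕ ψ`. The potential equations say that `π_β = e^f · (μ × ν)` has marginals
`μ` and `ν`, so `∫ e^f d(μ × ν) = 1`. For a plan `π`, Gibbs' inequality `KL(π ‖ π_β) ≥ 0` unfolds
to `∫ f dπ ≤ KL(π ‖ μ × ν)`, and `∫ f dπ = ∫ βA dπ + ∫ φ dμ + ∫ ψ dν` because `π` has marginals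
`μ` and `ν`. For `π = π_β` the log-density is `f` itself, so the bound is attained.
-/

open scoped ENNReal

lemma Continuous.integrable_of_compactSpace {Z E : Type*} [TopologicalSpace Z] [CompactSpace Z]
    [MeasurableSpace Z] [OpensMeasurableSpace Z] [NormedAddCommGroup E]
    {μ : Measure Z} [IsFiniteMeasure μ] {f : Z → E} (hf : Continuous f) : Integrable f μ :=
  hf.integrable_of_hasCompactSupport (HasCompactSupport.of_compactSpace f)

lemma continuous_of_abs_sub_le_mul_dist_add_dist {X Y : Type*} [PseudoMetricSpace X]
    [PseudoMetricSpace Y] {c : X × Y → ℝ} {L : ℝ}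
    (hc : ∀ p q : X × Y, |c p - c q| ≤ L * (dist p.1 q.1 + dist p.2 q.2)) : Continuous c := by
  refine (LipschitzWith.of_dist_le' (K := 2 * max L 0) fun p q => ?_).continuous
  have hsum : dist p.1 q.1 + dist p.2 q.2 ≤ 2 * dist p q := by
    rw [Prod.dist_eq]
    linarith [le_max_left (dist p.1 q.1) (dist p.2 q.2), le_max_right (dist p.1 q.1) (dist p.2 q.2)]
  calc dist (c p) (c q) = |c p - c q| := Real.dist_eq _ _
    _ ≤ L * (dist p.1 q.1 + dist p.2 q.2) := hc p q
    _ ≤ max L 0 * (dist p.1 q.1 + dist p.2 q.2) := by gcongr; exact le_max_left _ _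
    _ ≤ max L 0 * (2 * dist p q) := by gcongr
    _ = 2 * max L 0 * dist p q := by ring

lemma lintegral_ofReal_eq_one {Z : Type*} [MeasurableSpace Z] {μ : Measure Z} {f : Z → ℝ}
    (hf : Integrable f μ) (hf_nonneg : 0 ≤ f) (h : ∫ z, f z ∂μ = 1) :
    ∫⁻ z, ENNReal.ofReal (f z) ∂μ = 1 := by
  rw [← ofReal_integral_eq_lintegral_ofReal hf (Eventually.of_forall hf_nonneg), h,
    ENNReal.ofReal_one]

theorem integral_sub_log_integral_exp_le_integral_llr {Z : Type*} [MeasurableSpace Z]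
    {π ρ : Measure Z} [IsProbabilityMeasure π] [SigmaFinite ρ] [NeZero ρ] {f : Z → ℝ}
    (hπρ : π ≪ ρ) (hllr : Integrable (llr π ρ) π) (hfπ : Integrable f π)
    (hfρ : Integrable (fun z => Real.exp (f z)) ρ) :
    ∫ z, f z ∂π - Real.log (∫ z, Real.exp (f z) ∂ρ) ≤ ∫ z, llr π ρ z ∂π := by
  have := isProbabilityMeasure_tilted hfρ
  have gibbs := InformationTheory.integral_llr_add_sub_measure_univ_nonneg
    (hπρ.trans (absolutelyContinuous_tilted hfρ)) (integrable_llr_tilted_right hπρ hfπ hllr hfρ)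
  rw [integral_llr_tilted_right hπρ hfπ hfρ hllr] at gibbs
  simp only [probReal_univ, add_sub_cancel_right] at gibbs
  linarith

section Plans

variable {X Y : Type*} [MeasurableSpace X] [MeasurableSpace Y] {μ : Measure X} {ν : Measure Y}

theorem negKL_le_log_integral_exp_sub_integral [SigmaFinite μ] [SigmaFinite ν]
    [NeZero (μ.prod ν)] {π : Measure (X × Y)} [IsProbabilityMeasure π] {f : X × Y → ℝ}
    (hfπ : Integrable f π) (hf : Integrable (fun p => Real.exp (f p)) (μ.prod ν)) :
    negKL μ ν π ≤ ((Real.log (∫ p, Real.exp (f p) ∂(μ.prod ν)) - ∫ p, f p ∂π : ℝ) : EReal) := by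
  unfold negKL
  split_ifs with h
  · exact EReal.coe_le_coe_iff.mpr
      (by linarith [integral_sub_log_integral_exp_le_integral_llr h.1 h.2 hfπ hf])
  · exact bot_le

theorem llr_withDensity_ofReal_exp {Z : Type*} [MeasurableSpace Z] (ρ : Measure Z)
    [SigmaFinite ρ] {f : Z → ℝ} (hf : Measurable f) :
    llr (ρ.withDensity fun z => ENNReal.ofReal (Real.exp (f z))) ρ =ᵐ[ρ] f := by
  filter_upwards [Measure.rnDeriv_withDensity ρ (hf.exp.ennreal_ofReal)] with z hz
  rw [llr, hz, ENNReal.toReal_ofReal (Real.exp_pos _).le, Real.log_exp]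

theorem negKL_withDensity_ofReal_exp [SigmaFinite μ] [SigmaFinite ν] {f : X × Y → ℝ}
    (hf : Measurable f)
    (hfi : Integrable f ((μ.prod ν).withDensity fun p => ENNReal.ofReal (Real.exp (f p)))) :
    negKL μ ν ((μ.prod ν).withDensity fun p => ENNReal.ofReal (Real.exp (f p))) =
      ((-∫ p, f p ∂((μ.prod ν).withDensity fun p => ENNReal.ofReal (Real.exp (f p))) : ℝ) :
        EReal) := by
  have hac := withDensity_absolutelyContinuous (μ.prod ν) fun p => ENNReal.ofReal (Real.exp (f p))
  have hllr := hac.ae_le (llr_withDensity_ofReal_exp (μ.prod ν) hf)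
  rw [negKL, if_pos ⟨hac, (integrable_congr hllr).mpr hfi⟩, integral_congr_ae hllr]

theorem map_fst_withDensity [SFinite μ] [SFinite ν] {g : X × Y → ℝ≥0∞} (hg : Measurable g)
    (hg_fst : ∀ x, ∫⁻ y, g (x, y) ∂ν = 1) : ((μ.prod ν).withDensity g).map Prod.fst = μ := by
  ext s hs
  rw [Measure.map_apply measurable_fst hs, ← Set.prod_univ,
    withDensity_apply _ (hs.prod MeasurableSet.univ), ← Measure.restrict_prod_eq_prod_univ,
    lintegral_prod _ hg.aemeasurable]
  simp [hg_fst]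

theorem map_snd_withDensity [SFinite μ] [SFinite ν] {g : X × Y → ℝ≥0∞} (hg : Measurable g)
    (hg_snd : ∀ y, ∫⁻ x, g (x, y) ∂μ = 1) : ((μ.prod ν).withDensity g).map Prod.snd = ν := by
  ext s hs
  rw [Measure.map_apply measurable_snd hs, ← Set.univ_prod,
    withDensity_apply _ (MeasurableSet.univ.prod hs), ← Measure.prod_restrict,
    Measure.restrict_univ, lintegral_prod_symm _ hg.aemeasurable]
  simp [hg_snd]

theorem isPlan_withDensity [IsProbabilityMeasure μ] [SFinite ν] {g : X × Y → ℝ≥0∞}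
    (hg : Measurable g) (hg_snd : ∀ y, ∫⁻ x, g (x, y) ∂μ = 1)
    (hg_fst : ∀ x, ∫⁻ y, g (x, y) ∂ν = 1) : IsPlan μ ν ((μ.prod ν).withDensity g) := by
  have hfst := map_fst_withDensity (μ := μ) hg hg_fst
  refine ⟨⟨?_⟩, hfst, map_snd_withDensity hg hg_snd⟩
  rw [← Set.preimage_univ (f := Prod.fst), ← Measure.map_apply measurable_fst .univ, hfst,
    measure_univ]

variable {g : X × Y → ℝ} {φ : X → ℝ} {ψ : Y → ℝ}

theorem IsPlan.integrable_add_comp_fst_add_comp_snd {π : Measure (X × Y)} (hπ : IsPlan μ ν π)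
    (hg : Integrable g π) (hφ : Integrable φ μ) (hψ : Integrable ψ ν) :
    Integrable (fun p => g p + φ p.1 + ψ p.2) π := by
  obtain ⟨-, hfst, hsnd⟩ := hπ
  rw [← hfst] at hφ
  rw [← hsnd] at hψ
  exact (hg.add (hφ.comp_measurable measurable_fst)).add (hψ.comp_measurable measurable_snd)

theorem IsPlan.integral_add_comp_fst_add_comp_snd {π : Measure (X × Y)} (hπ : IsPlan μ ν π)
    (hg : Integrable g π) (hφ : Integrable φ μ) (hψ : Integrable ψ ν) :
    ∫ p, (g p + φ p.1 + ψ p.2) ∂π = ∫ p, g p ∂π + ∫ x, φ x ∂μ + ∫ y, ψ y ∂ν := by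
  obtain ⟨-, hfst, hsnd⟩ := hπ
  rw [← hfst] at hφ ⊢
  rw [← hsnd] at hψ ⊢
  have hφπ : Integrable (fun p : X × Y => φ p.1) π := hφ.comp_measurable measurable_fst
  have hψπ : Integrable (fun p : X × Y => ψ p.2) π := hψ.comp_measurable measurable_snd
  rw [integral_add (f := fun p => g p + φ p.1) (hg.add hφπ) hψπ, integral_add hg hφπ,
    integral_map measurable_fst.aemeasurable hφ.aestronglyMeasurable,
    integral_map measurable_snd.aemeasurable hψ.aestronglyMeasurable]

theorem IsPlan.coe_integral_add_negKL_le [SigmaFinite μ] [SigmaFinite ν] {π : Measure (X × Y)}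
    (hπ : IsPlan μ ν π) (hg : Integrable g π) (hφ : Integrable φ μ) (hψ : Integrable ψ ν)
    (hexp : Integrable (fun p => Real.exp (g p + φ p.1 + ψ p.2)) (μ.prod ν))
    (hZ : ∫ p, Real.exp (g p + φ p.1 + ψ p.2) ∂(μ.prod ν) = 1) :
    ((∫ p, g p ∂π : ℝ) : EReal) + negKL μ ν π ≤ ((-∫ x, φ x ∂μ - ∫ y, ψ y ∂ν : ℝ) : EReal) := by
  have := hπ.1
  have : NeZero (μ.prod ν) := ⟨fun h => by simp [h] at hZ⟩
  have hKL := negKL_le_log_integral_exp_sub_integral (μ := μ) (ν := ν)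
    (hπ.integrable_add_comp_fst_add_comp_snd hg hφ hψ) hexp
  rw [hZ, Real.log_one, hπ.integral_add_comp_fst_add_comp_snd hg hφ hψ] at hKL
  calc _ ≤ ((∫ p, g p ∂π : ℝ) : EReal) +
        ((0 - (∫ p, g p ∂π + ∫ x, φ x ∂μ + ∫ y, ψ y ∂ν) : ℝ) : EReal) := by gcongr
    _ = _ := by rw [← EReal.coe_add]; ring_nf

theorem IsPlan.coe_integral_add_negKL_eq [SigmaFinite μ] [SigmaFinite ν] {π₀ : Measure (X × Y)}
    (hπ₀ : IsPlan μ ν π₀)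
    (hπ₀_eq : π₀ = (μ.prod ν).withDensity fun p => ENNReal.ofReal (Real.exp (g p + φ p.1 + ψ p.2)))
    (hgm : Measurable g) (hφm : Measurable φ) (hψm : Measurable ψ) (hg : Integrable g π₀)
    (hφ : Integrable φ μ) (hψ : Integrable ψ ν) :
    ((∫ p, g p ∂π₀ : ℝ) : EReal) + negKL μ ν π₀ = ((-∫ x, φ x ∂μ - ∫ y, ψ y ∂ν : ℝ) : EReal) := by
  have hf := hπ₀.integrable_add_comp_fst_add_comp_snd hg hφ hψ
  rw [hπ₀_eq] at hf
  rw [hπ₀_eq, negKL_withDensity_ofReal_exp (by fun_prop) hf, ← hπ₀_eq,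
    hπ₀.integral_add_comp_fst_add_comp_snd hg hφ hψ, ← EReal.coe_add]
  ring_nf

theorem pressure_eq_of_le_of_eq {B : X × Y → ℝ} {v : EReal}
    (hle : ∀ π, IsPlan μ ν π → ((∫ p, B p ∂π : ℝ) : EReal) + negKL μ ν π ≤ v)
    {π₀ : Measure (X × Y)} (hπ₀ : IsPlan μ ν π₀)
    (heq : ((∫ p, B p ∂π₀ : ℝ) : EReal) + negKL μ ν π₀ = v) : pressure μ ν B = v :=
  le_antisymm (iSup_le fun π => hle π.1 π.2) (heq ▸ le_iSup_of_le ⟨π₀, hπ₀⟩ le_rfl)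

end Plans

theorem stmt3_general
    {X Y : Type*}
    [MetricSpace X] [CompactSpace X] [MeasurableSpace X] [BorelSpace X]
    [MetricSpace Y] [CompactSpace Y] [MeasurableSpace Y] [BorelSpace Y]
    (μ : Measure X) [IsProbabilityMeasure μ]
    (ν : Measure Y) [IsProbabilityMeasure ν]
    (c : X × Y → ℝ) (L : ℝ)
    (hc : ∀ p q : X × Y, |c p - c q| ≤ L * (dist p.1 q.1 + dist p.2 q.2))
    (A : X × Y → ℝ) (hA : A = fun p => - c p)
    (β : ℝ)
    (φ : X → ℝ) (ψ : Y → ℝ) (hφ : Continuous φ) (hψ : Continuous ψ)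
    (h1 : ∀ y : Y, ∫ x, Real.exp (β * A (x, y) + φ x + ψ y) ∂μ = 1)
    (h2 : ∀ x : X, ∫ y, Real.exp (β * A (x, y) + φ x + ψ y) ∂ν = 1)
    (πβ : Measure (X × Y))
    (hπβ : πβ = (μ.prod ν).withDensity
      (fun p => ENNReal.ofReal (Real.exp (β * A p + φ p.1 + ψ p.2)))) :
    (∀ π : Measure (X × Y), IsPlan μ ν π →
      ((∫ p, β * A p ∂π : ℝ) : EReal) + negKL μ ν π ≤
        ((- ∫ x, φ x ∂μ - ∫ y, ψ y ∂ν : ℝ) : EReal)) ∧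
    ((∫ p, β * A p ∂πβ : ℝ) : EReal) + negKL μ ν πβ =
      ((- ∫ x, φ x ∂μ - ∫ y, ψ y ∂ν : ℝ) : EReal) ∧
    pressure μ ν (fun p => β * A p) =
      ((- ∫ x, φ x ∂μ - ∫ y, ψ y ∂ν : ℝ) : EReal) := by
  have hAc : Continuous A := hA ▸ (continuous_of_abs_sub_le_mul_dist_add_dist hc).neg
  have hexp : Continuous fun p : X × Y => Real.exp (β * A p + φ p.1 + ψ p.2) := by fun_prop
  have hplan : IsPlan μ ν πβ := hπβ ▸ isPlan_withDensity (by fun_prop)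
    (fun y => lintegral_ofReal_eq_one (hexp.comp (.prodMk_left y)).integrable_of_compactSpace
      (fun _ => (Real.exp_pos _).le) (h1 y))
    (fun x => lintegral_ofReal_eq_one (hexp.comp (.prodMk_right x)).integrable_of_compactSpace
      (fun _ => (Real.exp_pos _).le) (h2 x))
  have hZ : ∫ p, Real.exp (β * A p + φ p.1 + ψ p.2) ∂(μ.prod ν) = 1 := by
    rw [integral_prod _ hexp.integrable_of_compactSpace]
    simp [h2]
  have hβA : Continuous fun p => β * A p := by fun_prop
  have hupper : ∀ π, IsPlan μ ν π → ((∫ p, β * A p ∂π : ℝ) : EReal) + negKL μ ν π ≤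
      ((- ∫ x, φ x ∂μ - ∫ y, ψ y ∂ν : ℝ) : EReal) := fun π hπ =>
    have := hπ.1
    hπ.coe_integral_add_negKL_le hβA.integrable_of_compactSpace hφ.integrable_of_compactSpace
      hψ.integrable_of_compactSpace hexp.integrable_of_compactSpace hZ
  have := hplan.1
  have heq := hplan.coe_integral_add_negKL_eq hπβ hβA.measurable hφ.measurable hψ.measurable
      hβA.integrable_of_compactSpace hφ.integrable_of_compactSpace hψ.integrable_of_compactSpace
  exact ⟨hupper, heq, pressure_eq_of_le_of_eq hupper hplan heq⟩

theorem stmt3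
    {X Y : Type*}
    [MetricSpace X] [CompactSpace X] [MeasurableSpace X] [BorelSpace X]
    [MetricSpace Y] [CompactSpace Y] [MeasurableSpace Y] [BorelSpace Y]
    (μ : Measure X) [IsProbabilityMeasure μ] [μ.IsOpenPosMeasure]
    (ν : Measure Y) [IsProbabilityMeasure ν] [ν.IsOpenPosMeasure]
    (c : X × Y → ℝ) (L : ℝ)
    (hc : ∀ p q : X × Y, |c p - c q| ≤ L * (dist p.1 q.1 + dist p.2 q.2))
    (A : X × Y → ℝ) (hA : A = fun p => - c p)
    (β : ℝ) (hβ : 0 < β)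
    (φ : X → ℝ) (ψ : Y → ℝ) (hφ : Continuous φ) (hψ : Continuous ψ)
    (h1 : ∀ y : Y, ∫ x, Real.exp (β * A (x, y) + φ x + ψ y) ∂μ = 1)
    (h2 : ∀ x : X, ∫ y, Real.exp (β * A (x, y) + φ x + ψ y) ∂ν = 1)
    (πβ : Measure (X × Y))
    (hπβ : πβ = (μ.prod ν).withDensity
      (fun p => ENNReal.ofReal (Real.exp (β * A p + φ p.1 + ψ p.2)))) :
    (∀ π : Measure (X × Y), IsPlan μ ν π →
      ((∫ p, β * A p ∂π : ℝ) : EReal) + negKL μ ν π ≤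
        ((- ∫ x, φ x ∂μ - ∫ y, ψ y ∂ν : ℝ) : EReal)) ∧
    ((∫ p, β * A p ∂πβ : ℝ) : EReal) + negKL μ ν πβ =
      ((- ∫ x, φ x ∂μ - ∫ y, ψ y ∂ν : ℝ) : EReal) ∧
    pressure μ ν (fun p => β * A p) =
      ((- ∫ x, φ x ∂μ - ∫ y, ψ y ∂ν : ℝ) : EReal) :=
  stmt3_general μ ν c L hc A hA β φ ψ hφ hψ h1 h2 πβ hπβ
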